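/- Correctness of garbage collection for the CESK* machine: if state ς = (e, ρ, σ, κ) steps to ς' in the CESK* machine, and σ|L is the restriction of σ to the addresses L live in ς (computed by the GC machine from the roots LL(e,ρ) ∪ LL(κ)), then (e, ρ, σ|L, κ) steps to a state that is identical to ς' up to restriction of its store to its own live addresses. -/

import Mathlib

/- Statement 13: correctness of garbage collection for the CESK* machine:
   stepping commutes with restriction of the store to the live addresses. -/

inductive Exp : Type
  | ref : String → Exp
  | lam : String → Exp → Exp
  | app : Exp → Exp → Exp
deriving DecidableEq

def Exp.fv : Exp → List String
  | .ref x => [x]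
  | .lam x e => e.fv.filter (· ≠ x)
  | .app e₀ e₁ => e₀.fv ++ e₁.fv

abbrev Addr := ℕ
abbrev Env := List (String × Addr)

inductive Kont : Type
  | mt
  | ar (e : Exp) (ρ : Env) (a : Addr)
  | fn (v : Exp) (ρ : Env) (a : Addr)

inductive Storable : Type
  | clo (v : Exp) (ρ : Env)
  | kont (κ : Kont)

abbrev Store := Addr → Option Storable
abbrev State := Exp × Env × Store × Kont

/-- The CESK* machine (store-allocated continuations, nondeterministic fresh
    allocation). -/
inductive Step : State → State → Prop
  | var {x ρ σ κ a v ρ'} :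
      List.lookup x ρ = some a → σ a = some (.clo v ρ') →
      Step (.ref x, ρ, σ, κ) (v, ρ', σ, κ)
  | app {e₀ e₁ ρ σ κ} {a : Addr} :
      σ a = none →
      Step (.app e₀ e₁, ρ, σ, κ)
        (e₀, ρ, Function.update σ a (some (.kont κ)), .ar e₁ ρ a)
  | arg {x e ρ σ e' ρ' a} :
      Step (.lam x e, ρ, σ, .ar e' ρ' a) (e', ρ', σ, .fn (.lam x e) ρ a)
  | beta {x e ρ σ y e' ρ' b κ} {a : Addr} :
      σ b = some (.kont κ) → σ a = none →
      Step (.lam x e, ρ, σ, .fn (.lam y e') ρ' b)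
        (e', (y, a) :: ρ', Function.update σ a (some (.clo (.lam x e) ρ)), κ)

/-- The addresses directly mentioned by a continuation frame: its saved
    continuation pointer, and the environment restricted to the free
    variables of its expression component. -/
inductive KDirect : Kont → Addr → Prop
  | ar_ptr {e ρ a} : KDirect (.ar e ρ a) a
  | ar_env {e ρ a x b} :
      x ∈ e.fv → List.lookup x ρ = some b → KDirect (.ar e ρ a) b
  | fn_ptr {v ρ a} : KDirect (.fn v ρ a) a
  | fn_env {v ρ a x b} :
      x ∈ v.fv → List.lookup x ρ = some b → KDirect (.fn v ρ a) b

/-- The live addresses of a state (e, ρ, σ, κ): the least set containing the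
    roots (ρ restricted to fv(e), and the addresses of κ) and closed under
    the live-locations of stored values. -/
inductive Live (σ : Store) (e : Exp) (ρ : Env) (κ : Kont) : Addr → Prop
  | root_env {x a} : x ∈ e.fv → List.lookup x ρ = some a → Live σ e ρ κ a
  | root_kont {a} : KDirect κ a → Live σ e ρ κ a
  | step_clo {a v ρ' x b} :
      Live σ e ρ κ a → σ a = some (.clo v ρ') →
      x ∈ v.fv → List.lookup x ρ' = some b → Live σ e ρ κ b
  | step_kont {a κ' b} :
      Live σ e ρ κ a → σ a = some (.kont κ') → KDirect κ' b → Live σ e ρ κ b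

open Classical in
/-- Restriction of a store to a set of addresses. -/
noncomputable def restrict (σ : Store) (L : Addr → Prop) : Store :=
  fun a => if L a then σ a else none

/-- Live addresses of a whole state. -/
def liveOf : State → Addr → Prop
  | (e, ρ, σ, κ) => Live σ e ρ κ

/-- Restriction of a whole state's store to its live addresses. -/
noncomputable def gcState : State → State
  | (e, ρ, σ, κ) => (e, ρ, restrict σ (Live σ e ρ κ), κ)

/-!
Every address a transition dereferences is live, so the collected state can take the same
transition, allocating the same fresh address (still free after collection). The successor's
live addresses lie among the old live addresses plus the fresh one, and on that set the two
successor stores agree; since liveness only inspects the store at live addresses, both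
successors collect to the same state.
-/

open Function

inductive Storable.Points : Storable → Addr → Prop
  | clo {v ρ x b} : x ∈ v.fv → List.lookup x ρ = some b → Storable.Points (.clo v ρ) b
  | kont {κ b} : KDirect κ b → Storable.Points (.kont κ) b

section Restrict

variable {σ τ : Store} {L : Addr → Prop} {a : Addr}

theorem restrict_apply_of_mem (h : L a) : restrict σ L a = σ a := by
  simp [restrict, h]

theorem restrict_apply_of_eq_none (h : σ a = none) : restrict σ L a = none := by
  by_cases hL : L a <;> simp [restrict, hL, h]

theorem restrict_congr (h : Set.EqOn τ σ L) : restrict τ L = restrict σ L := by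
  funext c
  by_cases hc : L c
  · simp [restrict, hc, h hc]
  · simp [restrict, hc]

end Restrict

namespace Live

variable {σ τ : Store} {e e' : Exp} {ρ ρ' : Env} {κ κ' : Kont} {a b : Addr}

theorem of_points (ha : Live σ e ρ κ a) {s : Storable} (hs : σ a = some s) (hb : s.Points b) :
    Live σ e ρ κ b := by
  cases hb with
  | clo hx hlk => exact .step_clo ha hs hx hlk
  | kont hk => exact .step_kont ha hs hk

theorem subset_of_closed {P : Addr → Prop}
    (env : ∀ {x b}, x ∈ e.fv → List.lookup x ρ = some b → P b)
    (kont : ∀ {b}, KDirect κ b → P b)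
    (closed : ∀ {a s b}, P a → σ a = some s → Storable.Points s b → P b)
    (hb : Live σ e ρ κ b) : P b := by
  induction hb with
  | root_env hx hlk => exact env hx hlk
  | root_kont hk => exact kont hk
  | step_clo _ hσ hx hlk ih => exact closed ih hσ (.clo hx hlk)
  | step_kont _ hσ hk ih => exact closed ih hσ (.kont hk)

theorem of_eqOn (h : Set.EqOn τ σ (Live σ e ρ κ)) (hb : Live σ e ρ κ b) :
    Live τ e ρ κ b := by
  induction hb with
  | root_env hx hlk => exact .root_env hx hlk
  | root_kont hk => exact .root_kont hk
  | step_clo ha hσ hx hlk ih => exact .step_clo ih ((h ha).trans hσ) hx hlk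
  | step_kont ha hσ hk ih => exact .step_kont ih ((h ha).trans hσ) hk

theorem eq_of_eqOn (h : Set.EqOn τ σ (Live σ e ρ κ)) : Live τ e ρ κ = Live σ e ρ κ := by
  funext b
  refine propext ⟨subset_of_closed .root_env .root_kont ?_, of_eqOn h⟩
  intro a s b ha hs hb
  exact ha.of_points ((h ha).symm.trans hs) hb

theorem subset_of_roots
    (env : ∀ {x b}, x ∈ e'.fv → List.lookup x ρ' = some b → Live σ e ρ κ b)
    (kont : ∀ {b}, KDirect κ' b → Live σ e ρ κ b) :
    Live σ e' ρ' κ' b → Live σ e ρ κ b :=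
  subset_of_closed env kont fun ha hs hb => ha.of_points hs hb

theorem update_subset {s : Storable} (hs : ∀ {b}, s.Points b → Live σ e ρ κ b)
    (env : ∀ {x b}, x ∈ e'.fv → List.lookup x ρ' = some b → b = a ∨ Live σ e ρ κ b)
    (kont : ∀ {b}, KDirect κ' b → b = a ∨ Live σ e ρ κ b) :
    Live (update σ a (some s)) e' ρ' κ' b → b = a ∨ Live σ e ρ κ b := by
  refine subset_of_closed env kont fun {c s' b} hc hs' hb => ?_
  rcases eq_or_ne c a with rfl | hca
  · rw [update_self, Option.some_inj] at hs'
    exact .inr (hs (hs' ▸ hb))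
  · rw [update_of_ne hca] at hs'
    exact .inr ((hc.resolve_left hca).of_points hs' hb)

end Live

section Transitions

variable {σ : Store} {e e' : Exp} {ρ ρ' : Env} {κ : Kont} {x y : String} {a b c : Addr}

theorem live_subset_of_var {v : Exp} (hlk : List.lookup x ρ = some a)
    (hσ : σ a = some (.clo v ρ')) :
    Live σ v ρ' κ c → Live σ (.ref x) ρ κ c :=
  Live.subset_of_roots
    (fun hx hlk' => (Live.root_env (List.mem_singleton_self x) hlk).of_points hσ (.clo hx hlk'))
    .root_kont

theorem live_subset_of_arg :
    Live σ e' ρ' (.fn (.lam x e) ρ a) c → Live σ (.lam x e) ρ (.ar e' ρ' a) c := by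
  refine Live.subset_of_roots (fun hx hlk => .root_kont (.ar_env hx hlk)) fun hk => ?_
  cases hk with
  | fn_ptr => exact .root_kont .ar_ptr
  | fn_env hx hlk => exact .root_env hx hlk

theorem live_subset_of_app {e₀ e₁ : Exp} :
    Live (update σ a (some (.kont κ))) e₀ ρ (.ar e₁ ρ a) c →
      c = a ∨ Live σ (.app e₀ e₁) ρ κ c := by
  refine Live.update_subset (fun | .kont hk => .root_kont hk)
    (fun hx hlk => .inr (.root_env (List.mem_append_left _ hx) hlk)) fun hk => ?_
  cases hk with
  | ar_ptr => exact .inl rfl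
  | ar_env hx hlk => exact .inr (.root_env (List.mem_append_right _ hx) hlk)

theorem live_subset_of_beta {κ' : Kont} (hσb : σ b = some (.kont κ')) :
    Live (update σ a (some (.clo (.lam x e) ρ))) e' ((y, a) :: ρ') κ' c →
      c = a ∨ Live σ (.lam x e) ρ (.fn (.lam y e') ρ' b) c := by
  refine Live.update_subset (fun | .clo hx hlk => .root_env hx hlk) (fun {x' c} hx hlk => ?_)
    fun hk => .inr ((Live.root_kont .fn_ptr).of_points hσb (.kont hk))
  by_cases hxy : x' = y
  · subst hxy
    simp only [List.lookup, beq_self_eq_true, Option.some_inj] at hlk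
    exact .inl hlk.symm
  · simp only [List.lookup, beq_eq_false_iff_ne.mpr hxy] at hlk
    exact .inr (.root_kont (.fn_env (List.mem_filter.mpr ⟨hx, by simpa using hxy⟩) hlk))

end Transitions

section Collection

variable {σ τ : Store} {e : Exp} {ρ : Env} {κ : Kont} {L : Addr → Prop}

theorem gcState_congr (h : Set.EqOn τ σ (Live σ e ρ κ)) :
    gcState (e, ρ, τ, κ) = gcState (e, ρ, σ, κ) := by
  simp only [gcState, Live.eq_of_eqOn h, restrict_congr h]

theorem gcState_restrict (h : ∀ {c}, Live σ e ρ κ c → L c) :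
    gcState (e, ρ, restrict σ L, κ) = gcState (e, ρ, σ, κ) :=
  gcState_congr fun _ hc => restrict_apply_of_mem (h hc)

theorem gcState_update_restrict {a : Addr} {s : Option Storable}
    (h : ∀ {c}, Live (update σ a s) e ρ κ c → c = a ∨ L c) :
    gcState (e, ρ, update (restrict σ L) a s, κ) = gcState (e, ρ, update σ a s, κ) := by
  refine gcState_congr fun c hc => ?_
  rcases eq_or_ne c a with rfl | hca
  · simp only [update_self]
  · rw [update_of_ne hca, update_of_ne hca,
      restrict_apply_of_mem ((h hc).resolve_left hca)]

end Collection

theorem gc_correct (ς ς' : State) (h : Step ς ς') :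
    ∃ ς'' : State, Step (gcState ς) ς'' ∧ gcState ς'' = gcState ς' := by
  cases h with
  | var hlk hσ =>
    exact ⟨_,
      .var hlk ((restrict_apply_of_mem (.root_env (List.mem_singleton_self _) hlk)).trans hσ),
      gcState_restrict (live_subset_of_var hlk hσ)⟩
  | app hσa =>
    exact ⟨_, .app (restrict_apply_of_eq_none hσa), gcState_update_restrict live_subset_of_app⟩
  | arg => exact ⟨_, .arg, gcState_restrict live_subset_of_arg⟩
  | beta hσb hσa =>
    exact ⟨_, .beta (by rw [restrict_apply_of_mem (.root_kont .fn_ptr), hσb])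
      (restrict_apply_of_eq_none hσa), gcState_update_restrict (live_subset_of_beta hσb)⟩
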